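/- Let p be a probability density with respect to a σ-finite measure μ, let s : X → ℝ be measurable, and let β ≥ 0 satisfy Z(β) := E_{X∼p}[exp(β s(X))] < ∞. Then for every probability density q absolutely continuous with respect to p with E_q[s(X)] ≥ m, one has KL(q‖p) ≥ β m − log Z(β); equality for a given q with E_q[s(X)] = m holds if and only if q equals the exponentially tilted density q_β(x) = p(x) exp(β s(x))/Z(β) p-almost everywhere. -/

import Mathlib

open MeasureTheory Real Set
open scoped Classical

/-- KL divergence between densities `q` and `p` w.r.t. a common dominating measure `μ`,
valued in `EReal`, set to `⊤` when `q` is not absolutely continuous w.r.t. `p`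
(or when the defining integrand fails to be integrable). -/
noncomputable def KLd {α : Type*} [MeasurableSpace α] (μ : Measure α) (q p : α → ℝ) : EReal :=
  if (∀ᵐ x ∂μ, p x = 0 → q x = 0) ∧
      Integrable (fun x => q x * Real.log (q x / p x)) μ then
    ((∫ x, q x * Real.log (q x / p x) ∂μ : ℝ) : EReal)
  else ⊤

/-- `p` is a probability density with respect to `μ`. -/
def IsProbDensity {α : Type*} [MeasurableSpace α] (μ : Measure α) (p : α → ℝ) : Prop :=
  Measurable p ∧ (∀ x, 0 ≤ p x) ∧ ∫ x, p x ∂μ = 1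

/-!
Gibbs variational principle. Writing `r = p e^{β s} / Z(β)` for the tilted density, on `{p > 0}`
one has `log (q / p) = log (q / r) + β s − log Z(β)`, so integrating against `q` gives
`KL(q‖p) = KL(q‖r) + β E_q[s] − log Z(β)`. Gibbs' inequality `KL(q‖r) ≥ 0`, with equality
exactly when `q = r` a.e., holds because the integrand `q log (q / r) − (q − r)`, which
integrates to `KL(q‖r)` when `∫ q = ∫ r`, equals `r · klFun (q / r) ≥ 0` and vanishes only where
`q = r`. Together with `β ≥ 0` and `E_q[s] ≥ m` this yields both claims.
-/

open InformationTheory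

section

variable {α : Type*} [MeasurableSpace α] {μ : Measure α}

lemma mul_log_div_sub_sub_eq_mul_klFun (a : ℝ) {b : ℝ} (hb : b ≠ 0) :
    a * log (a / b) - (a - b) = b * klFun (a / b) := by
  rw [klFun_apply]
  field_simp
  ring

lemma mul_log_div_sub_sub_nonneg {a b : ℝ} (ha : 0 ≤ a) (hb : 0 ≤ b) (hab : b = 0 → a = 0) :
    0 ≤ a * log (a / b) - (a - b) := by
  rcases hb.eq_or_lt with rfl | hb
  · simp [hab rfl]
  · rw [mul_log_div_sub_sub_eq_mul_klFun a hb.ne']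
    exact mul_nonneg hb.le (klFun_nonneg (div_nonneg ha hb.le))

lemma mul_log_div_sub_sub_eq_zero_iff {a b : ℝ} (ha : 0 ≤ a) (hb : 0 ≤ b)
    (hab : b = 0 → a = 0) : a * log (a / b) - (a - b) = 0 ↔ a = b := by
  rcases hb.eq_or_lt with rfl | hb
  · simp [hab rfl]
  · rw [mul_log_div_sub_sub_eq_mul_klFun a hb.ne', mul_eq_zero,
      klFun_eq_zero_iff (div_nonneg ha hb.le), div_eq_one_iff_eq hb.ne']
    simp [hb.ne']

section Gibbs

variable {q r : α → ℝ}

lemma integral_mul_log_div_eq_integral_sub_sub (hq_int : Integrable q μ)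
    (hr_int : Integrable r μ) (hqr : ∫ x, q x ∂μ = ∫ x, r x ∂μ)
    (h : Integrable (fun x => q x * log (q x / r x)) μ) :
    ∫ x, q x * log (q x / r x) ∂μ = ∫ x, (q x * log (q x / r x) - (q x - r x)) ∂μ := by
  have hsplit := integral_sub h (hq_int.sub hr_int)
  simp only [Pi.sub_apply] at hsplit
  rw [hsplit, integral_sub hq_int hr_int, hqr, sub_self, sub_zero]

lemma KLd_nonneg (hq : ∀ x, 0 ≤ q x) (hr : ∀ x, 0 ≤ r x) (hq_int : Integrable q μ)
    (hr_int : Integrable r μ) (hqr : ∫ x, q x ∂μ = ∫ x, r x ∂μ) : 0 ≤ KLd μ q r := by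
  unfold KLd
  split_ifs with h
  · rw [EReal.coe_nonneg, integral_mul_log_div_eq_integral_sub_sub hq_int hr_int hqr h.2]
    exact integral_nonneg_of_ae
      (h.1.mono fun x hx => mul_log_div_sub_sub_nonneg (hq x) (hr x) hx)
  · exact le_top

lemma KLd_eq_zero_iff (hq : ∀ x, 0 ≤ q x) (hr : ∀ x, 0 ≤ r x) (hq_int : Integrable q μ)
    (hr_int : Integrable r μ) (hqr : ∫ x, q x ∂μ = ∫ x, r x ∂μ) :
    KLd μ q r = 0 ↔ q =ᵐ[μ] r := by
  constructor
  · intro h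
    unfold KLd at h
    split_ifs at h with hKL
    · obtain ⟨hac, hint⟩ := hKL
      have hgap : ∫ x, (q x * log (q x / r x) - (q x - r x)) ∂μ = 0 := by
        rw [← integral_mul_log_div_eq_integral_sub_sub hq_int hr_int hqr hint]
        exact_mod_cast h
      have hgap_ae := (integral_eq_zero_iff_of_nonneg_ae
        (hac.mono fun x hx => mul_log_div_sub_sub_nonneg (hq x) (hr x) hx)
        (hint.sub (hq_int.sub hr_int))).mp hgap
      filter_upwards [hgap_ae, hac] with x hx hacx
      exact (mul_log_div_sub_sub_eq_zero_iff (hq x) (hr x) hacx).mp hx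
    · exact absurd h EReal.top_ne_zero
  · intro h
    have h0 : (fun x => q x * log (q x / r x)) =ᵐ[μ] 0 := h.mono fun x hx => by
      change q x * log (q x / r x) = 0
      rw [hx]
      rcases eq_or_ne (r x) 0 with h | h <;> simp [h]
    have hac : ∀ᵐ x ∂μ, r x = 0 → q x = 0 := h.mono fun x hx hx0 => hx.trans hx0
    rw [KLd, if_pos ⟨hac, (integrable_zero α ℝ μ).congr h0.symm⟩, integral_congr_ae h0]
    simp

end Gibbs

lemma IsProbDensity.integrable {p : α → ℝ} (hp : IsProbDensity μ p) : Integrable p μ :=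
  Integrable.of_integral_ne_zero (by rw [hp.2.2]; exact one_ne_zero)

noncomputable def tiltedDensity (μ : Measure α) (p s : α → ℝ) (β : ℝ) (x : α) : ℝ :=
  p x * exp (β * s x) / ∫ y, p y * exp (β * s y) ∂μ

section Tilted

variable {p s : α → ℝ} {β : ℝ}

lemma integral_mul_exp_pos (hp : IsProbDensity μ p)
    (hZ : Integrable (fun x => p x * exp (β * s x)) μ) :
    0 < ∫ x, p x * exp (β * s x) ∂μ := by
  rw [integral_pos_iff_support_of_nonneg (fun x => mul_nonneg (hp.2.1 x) (exp_pos _).le) hZ,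
    Function.support_mul_of_ne_zero_right _ fun x => (exp_pos _).ne']
  rw [← integral_pos_iff_support_of_nonneg hp.2.1 hp.integrable, hp.2.2]
  exact one_pos

lemma tiltedDensity_eq_zero_iff (hZ : 0 < ∫ y, p y * exp (β * s y) ∂μ) (x : α) :
    tiltedDensity μ p s β x = 0 ↔ p x = 0 := by
  simp [tiltedDensity, hZ.ne', (exp_pos _).ne']

lemma tiltedDensity_nonneg (hp : ∀ x, 0 ≤ p x) (x : α) : 0 ≤ tiltedDensity μ p s β x :=
  div_nonneg (mul_nonneg (hp x) (exp_pos _).le)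
    (integral_nonneg fun y => mul_nonneg (hp y) (exp_pos _).le)

lemma integrable_tiltedDensity (hZ : Integrable (fun x => p x * exp (β * s x)) μ) :
    Integrable (tiltedDensity μ p s β) μ :=
  hZ.div_const _

lemma integral_tiltedDensity (hZ : 0 < ∫ y, p y * exp (β * s y) ∂μ) :
    ∫ x, tiltedDensity μ p s β x ∂μ = 1 := by
  unfold tiltedDensity
  rw [integral_div, div_self hZ.ne']

lemma mul_log_div_eq_mul_log_div_tiltedDensity_add {q : α → ℝ}
    (hZ : 0 < ∫ y, p y * exp (β * s y) ∂μ) {x : α} (hpq : p x = 0 → q x = 0) :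
    q x * log (q x / p x) = q x * log (q x / tiltedDensity μ p s β x)
      + (β * (s x * q x) - log (∫ y, p y * exp (β * s y) ∂μ) * q x) := by
  rcases eq_or_ne (q x) 0 with hq | hq
  · simp [hq]
  have hp : p x ≠ 0 := fun h => hq (hpq h)
  rw [log_div hq hp, log_div hq ((tiltedDensity_eq_zero_iff hZ x).not.mpr hp), tiltedDensity,
    log_div (mul_ne_zero hp (exp_pos _).ne') hZ.ne', log_mul hp (exp_pos _).ne', log_exp]
  ring

lemma KLd_eq_KLd_tiltedDensity_add {q : α → ℝ} (hZ : 0 < ∫ y, p y * exp (β * s y) ∂μ)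
    (hq1 : ∫ x, q x ∂μ = 1) (hac : ∀ᵐ x ∂μ, p x = 0 → q x = 0)
    (hsq : Integrable (fun x => s x * q x) μ) :
    KLd μ q p = KLd μ q (tiltedDensity μ p s β)
      + ((β * ∫ x, s x * q x ∂μ - log (∫ y, p y * exp (β * s y) ∂μ) : ℝ) : EReal) := by
  set Z := ∫ y, p y * exp (β * s y) ∂μ
  have hdecomp := hac.mono fun x hx => mul_log_div_eq_mul_log_div_tiltedDensity_add hZ hx
  have hq_int : Integrable q μ := .of_integral_ne_zero (by simp [hq1])
  have hc_int : Integrable (fun x => β * (s x * q x) - log Z * q x) μ :=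
    (hsq.const_mul β).sub (hq_int.const_mul _)
  have hac_iff : (∀ᵐ x ∂μ, tiltedDensity μ p s β x = 0 → q x = 0) ↔
      ∀ᵐ x ∂μ, p x = 0 → q x = 0 := by
    simp only [tiltedDensity_eq_zero_iff hZ]
  have hint_iff : Integrable (fun x => q x * log (q x / p x)) μ ↔
      Integrable (fun x => q x * log (q x / tiltedDensity μ p s β x)) μ :=
    ⟨fun h => (h.sub hc_int).congr
        (hdecomp.mono fun x hx => by simp only [Pi.sub_apply, hx]; ring),
      fun h => (h.add hc_int).congr (hdecomp.mono fun x hx => hx.symm)⟩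
  have hc : ∫ x, (β * (s x * q x) - log Z * q x) ∂μ = β * ∫ x, s x * q x ∂μ - log Z := by
    rw [integral_sub (hsq.const_mul β) (hq_int.const_mul _),
      integral_const_mul, integral_const_mul, hq1, mul_one]
  unfold KLd
  rw [hac_iff, hint_iff]
  split_ifs with h
  · rw [integral_congr_ae hdecomp, integral_add h.2 hc_int, hc, EReal.coe_add]
  · rw [EReal.top_add_coe]

lemma ae_eq_tiltedDensity_iff {q : α → ℝ} (hZ : 0 < ∫ y, p y * exp (β * s y) ∂μ)
    (hac : ∀ᵐ x ∂μ, p x = 0 → q x = 0) :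
    q =ᵐ[μ] tiltedDensity μ p s β ↔ ∀ᵐ x ∂μ, p x ≠ 0 → q x = tiltedDensity μ p s β x := by
  refine ⟨fun h => h.mono fun x hx _ => hx, fun h => ?_⟩
  filter_upwards [h, hac] with x hx hacx
  by_cases hp : p x = 0
  · rw [hacx hp, (tiltedDensity_eq_zero_iff hZ x).mpr hp]
  · exact hx hp

end Tilted

end

theorem KL_lower_bound_tilted_general
    {α : Type*} [MeasurableSpace α] (μ : Measure α)
    (p : α → ℝ) (hp : IsProbDensity μ p)
    (s : α → ℝ)
    (β : ℝ) (hβ : 0 ≤ β)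
    (hZ : Integrable (fun x => p x * Real.exp (β * s x)) μ)
    (m : ℝ) :
    (∀ q : α → ℝ, IsProbDensity μ q → (∀ᵐ x ∂μ, p x = 0 → q x = 0) →
        Integrable (fun x => s x * q x) μ → m ≤ ∫ x, s x * q x ∂μ →
        ((β * m - Real.log (∫ y, p y * Real.exp (β * s y) ∂μ) : ℝ) : EReal) ≤ KLd μ q p) ∧
    (∀ q : α → ℝ, IsProbDensity μ q → (∀ᵐ x ∂μ, p x = 0 → q x = 0) →
        Integrable (fun x => s x * q x) μ → ∫ x, s x * q x ∂μ = m →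
        (KLd μ q p = ((β * m - Real.log (∫ y, p y * Real.exp (β * s y) ∂μ) : ℝ) : EReal) ↔
          (∀ᵐ x ∂μ, p x ≠ 0 →
            q x = p x * Real.exp (β * s x) / ∫ y, p y * Real.exp (β * s y) ∂μ))) := by
  have hZ_pos := integral_mul_exp_pos hp hZ
  have hr := tiltedDensity_nonneg (μ := μ) (s := s) (β := β) hp.2.1
  have hr_int := integrable_tiltedDensity hZ
  have hr1 := integral_tiltedDensity (s := s) hZ_pos
  refine ⟨fun q hq hac hsq hm => ?_, fun q hq hac hsq hm => ?_⟩
  · rw [KLd_eq_KLd_tiltedDensity_add hZ_pos hq.2.2 hac hsq]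
    refine le_add_of_nonneg_of_le ?_ (EReal.coe_le_coe_iff.mpr ?_)
    · exact KLd_nonneg hq.2.1 hr hq.integrable hr_int (hq.2.2.trans hr1.symm)
    · exact sub_le_sub_right (mul_le_mul_of_nonneg_left hm hβ) _
  · have add_eq_right_iff (a : EReal) (c : ℝ) : a + c = c ↔ a = 0 :=
      ⟨fun h => by simpa [EReal.add_sub_cancel_right] using congrArg (· - (c : EReal)) h,
        fun h => by simp [h]⟩
    rw [KLd_eq_KLd_tiltedDensity_add hZ_pos hq.2.2 hac hsq, hm, add_eq_right_iff,
      KLd_eq_zero_iff hq.2.1 hr hq.integrable hr_int (hq.2.2.trans hr1.symm),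
      ae_eq_tiltedDensity_iff hZ_pos hac]
    rfl

/-- For `β ≥ 0` with `Z(β) = E_p[exp(β s)] < ∞`: every density `q ≪ p` with `E_q[s] ≥ m`
satisfies `KL(q‖p) ≥ β m − log Z(β)`; and for `q` with `E_q[s] = m`, equality holds iff
`q` equals the tilted density `q_β = p·exp(β s)/Z(β)` `p`-almost everywhere. -/
theorem KL_lower_bound_tilted
    {α : Type*} [MeasurableSpace α] (μ : Measure α) [SigmaFinite μ]
    (p : α → ℝ) (hp : IsProbDensity μ p)
    (s : α → ℝ) (hs : Measurable s)
    (β : ℝ) (hβ : 0 ≤ β)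
    (hZ : Integrable (fun x => p x * Real.exp (β * s x)) μ)
    (m : ℝ) :
    (∀ q : α → ℝ, IsProbDensity μ q → (∀ᵐ x ∂μ, p x = 0 → q x = 0) →
        Integrable (fun x => s x * q x) μ → m ≤ ∫ x, s x * q x ∂μ →
        ((β * m - Real.log (∫ y, p y * Real.exp (β * s y) ∂μ) : ℝ) : EReal) ≤ KLd μ q p) ∧
    (∀ q : α → ℝ, IsProbDensity μ q → (∀ᵐ x ∂μ, p x = 0 → q x = 0) →
        Integrable (fun x => s x * q x) μ → ∫ x, s x * q x ∂μ = m →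
        (KLd μ q p = ((β * m - Real.log (∫ y, p y * Real.exp (β * s y) ∂μ) : ℝ) : EReal) ↔
          (∀ᵐ x ∂μ, p x ≠ 0 →
            q x = p x * Real.exp (β * s x) / ∫ y, p y * Real.exp (β * s y) ∂μ))) :=
  KL_lower_bound_tilted_general μ p hp s β hβ hZ m
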